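/- Let B = {b_1 < b_2 < b_3 < …} be an infinite strictly increasing sequence of integers with b_1 ≥ 3 and b_2 = 3b_1 + 2. Then there is no infinite strictly increasing sequence A = {a_1 < a_2 < …} of positive integers such that P(A) = ℕ \ B (where B is identified with its set of values). -/

import Mathlib

/-- The set of all finite subset sums of `A`: all sums of finitely many
pairwise distinct elements of `A`; by convention `0 ∈ subsetSums A`. -/
def subsetSums (A : Set ℕ) : Set ℕ :=
  {n | ∃ F : Finset ℕ, ↑F ⊆ A ∧ F.sum id = n}

/-!
Let `β = b₁`. Below `3β + 2` the subset sums of `A` are exactly the numbers other than `β`.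
The elements of `A` below `β` have subset sums covering `[0, β)` but missing `β`; as they are
all smaller than `β`, their subset sums form an interval, so their total is less than `β`.
Hence `β + 1`, which is a subset sum, must itself lie in `A`. Now take a representation `F` of
`2β + 1`: if `β + 1 ∈ F`, removing it represents `β`; otherwise adding it represents `3β + 2`.
-/

lemma zero_mem_subsetSums (A : Set ℕ) : 0 ∈ subsetSums A :=
  ⟨∅, by simp, rfl⟩

lemma subsetSums_mono {A A' : Set ℕ} (h : A ⊆ A') : subsetSums A ⊆ subsetSums A' :=
  fun _ ⟨F, hF, hsum⟩ ↦ ⟨F, hF.trans h, hsum⟩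

lemma le_sum_of_mem_subsetSums {T : Finset ℕ} {m : ℕ} (hm : m ∈ subsetSums T) :
    m ≤ T.sum id := by
  obtain ⟨F, hF, rfl⟩ := hm
  exact Finset.sum_le_sum_of_subset (Finset.coe_subset.1 hF)

lemma mem_subsetSums_of_le_sum {T : Finset ℕ} {β : ℕ} (hlt : ∀ t ∈ T, t < β)
    (hcov : ∀ m < β, m ∈ subsetSums T) {m : ℕ} (hm : m ≤ T.sum id) : m ∈ subsetSums T := by
  induction T using Finset.induction_on_max generalizing β m with
  | empty => simp_all [zero_mem_subsetSums]
  | insert M T hTM ih =>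
    have hMT : M ∉ T := fun h ↦ (hTM M h).false
    -- a subset sum below `M` cannot use `M`, so `T` covers `[0, M)`
    have hcovT : ∀ k < M, k ∈ subsetSums T := by
      intro k hk
      obtain ⟨F, hF, rfl⟩ := hcov k (hk.trans (hlt M (Finset.mem_insert_self M T)))
      refine ⟨F, fun x hx ↦ ?_, rfl⟩
      have hxT := hF hx
      simp only [Finset.coe_insert, Set.mem_insert_iff, Finset.mem_coe] at hxT
      rcases hxT with rfl | hxT
      · exact absurd (Finset.single_le_sum_of_canonicallyOrdered (f := id) hx) hk.not_ge
      · exact hxT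
    have ihT : ∀ k ≤ T.sum id, k ∈ subsetSums T := fun k hk ↦ ih hTM hcovT hk
    have hsubset : subsetSums T ⊆ subsetSums ↑(insert M T) :=
      subsetSums_mono (by simp)
    replace hm : m ≤ M + T.sum id := by rwa [Finset.sum_insert hMT] at hm
    by_cases hmT : m ≤ T.sum id
    · exact hsubset (ihT m hmT)
    have hMm : M ≤ m := by
      rcases Nat.eq_zero_or_pos M with h | h
      · omega
      · have := le_sum_of_mem_subsetSums (hcovT (M - 1) (by omega))
        omega
    obtain ⟨G, hG, hGsum⟩ := ihT (m - M) (by omega)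
    have hMG : M ∉ G := fun h ↦ hMT (hG h)
    refine ⟨insert M G, ?_, ?_⟩
    · simpa using Set.insert_subset_insert hG
    · rw [Finset.sum_insert hMG, hGsum]
      exact Nat.add_sub_cancel' hMm

section

variable {A : Set ℕ} {β : ℕ}

lemma sum_lt_of_subset_of_forall_lt (hlow : ∀ m < β, m ∈ subsetSums A) (hβ : β ∉ subsetSums A)
    {F : Finset ℕ} (hFA : ↑F ⊆ A) (hFβ : ∀ x ∈ F, x < β) : F.sum id < β := by
  classical
  set T := (Finset.range β).filter (· ∈ A)
  have hTA : ↑T ⊆ A := fun x hx ↦ (Finset.mem_filter.1 hx).2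
  have hFT : F ⊆ T := fun x hx ↦ Finset.mem_filter.2 ⟨Finset.mem_range.2 (hFβ x hx), hFA hx⟩
  have hcov : ∀ m < β, m ∈ subsetSums T := by
    intro m hm
    obtain ⟨G, hGA, rfl⟩ := hlow m hm
    refine ⟨G, fun x hx ↦ ?_, rfl⟩
    have hxβ := (Finset.single_le_sum_of_canonicallyOrdered (f := id) hx).trans_lt hm
    exact Finset.mem_filter.2 ⟨Finset.mem_range.2 hxβ, hGA hx⟩
  have hTβ : T.sum id < β := by
    by_contra! h
    exact hβ (subsetSums_mono hTA (mem_subsetSums_of_le_sum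
      (fun x hx ↦ Finset.mem_range.1 (Finset.mem_filter.1 hx).1) hcov h))
  exact (Finset.sum_le_sum_of_subset hFT).trans_lt hTβ

lemma add_one_mem_of_add_one_mem_subsetSums (hlow : ∀ m < β, m ∈ subsetSums A)
    (hβ : β ∉ subsetSums A) (h : β + 1 ∈ subsetSums A) : β + 1 ∈ A := by
  by_contra hA
  obtain ⟨F, hFA, hF⟩ := h
  refine (sum_lt_of_subset_of_forall_lt hlow hβ hFA fun x hx ↦ ?_).not_ge (by omega)
  have hxA : x ∈ A := hFA hx
  have hxβ : x ≠ β := fun hxβ ↦ hβ ⟨{x}, by simpa using hxA, by simp [hxβ]⟩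
  have hxF : x ≤ F.sum id := Finset.single_le_sum_of_canonicallyOrdered (f := id) hx
  have : x ≠ β + 1 := by rintro rfl; exact hA hxA
  omega

theorem three_mul_add_two_mem_subsetSums (hβ : β ∉ subsetSums A)
    (h : ∀ m < 3 * β + 2, m ≠ β → m ∈ subsetSums A) : 3 * β + 2 ∈ subsetSums A := by
  have hβ0 : β ≠ 0 := by rintro rfl; exact hβ (zero_mem_subsetSums A)
  have hβ1 : β + 1 ∈ A := add_one_mem_of_add_one_mem_subsetSums
    (fun m hm ↦ h m (by omega) hm.ne) hβ (h _ (by omega) (by omega))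
  obtain ⟨F, hFA, hF⟩ := h (2 * β + 1) (by omega) (by omega)
  by_cases hβ1F : β + 1 ∈ F
  · refine absurd ⟨F.erase (β + 1), fun x hx ↦ hFA (Finset.mem_of_mem_erase hx), ?_⟩ hβ
    have : (F.erase (β + 1)).sum id + (β + 1) = F.sum id := Finset.sum_erase_add F id hβ1F
    omega
  · refine ⟨insert (β + 1) F, by simpa using Set.insert_subset hβ1 hFA, ?_⟩
    rw [Finset.sum_insert hβ1F, hF, id]
    omega

end

theorem stmt_2_general (b : ℕ → ℕ)
    (hbmono : ∀ n, 1 ≤ n → b n < b (n + 1))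
    (hb2 : b 2 = 3 * b 1 + 2) :
    ¬ ∃ a : ℕ → ℕ,
      (∀ n, 1 ≤ n → a n < a (n + 1)) ∧
      (∀ n, 1 ≤ n → 0 < a n) ∧
      subsetSums (a '' {n | 1 ≤ n}) = (b '' {n | 1 ≤ n})ᶜ := by
  rintro ⟨a, -, -, hP⟩
  have hb : MonotoneOn b (Set.Ici 1) :=
    monotoneOn_of_le_succ Set.ordConnected_Ici fun n _ hn _ ↦ (hbmono n hn).le
  have hB : ∀ n, 1 ≤ n → b n < 3 * b 1 + 2 → b n = b 1 := by
    intro n hn hlt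
    obtain rfl | hn2 := hn.eq_or_lt
    · rfl
    · have := hb (Set.mem_Ici.2 one_le_two) (Set.mem_Ici.2 hn) hn2
      omega
  have hmem : ∀ m, m ∈ subsetSums (a '' {n | 1 ≤ n}) ↔ ∀ n, 1 ≤ n → b n ≠ m := by
    simp [hP]
  have key := three_mul_add_two_mem_subsetSums (β := b 1)
    (fun h ↦ (hmem _).1 h 1 le_rfl rfl)
    (fun m hm hmβ ↦ (hmem m).2 fun n hn hbn ↦ hmβ (hbn ▸ hB n hn (hbn ▸ hm)))
  exact (hmem _).1 key 2 one_le_two hb2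

theorem stmt_2 (b : ℕ → ℕ)
    (hbmono : ∀ n, 1 ≤ n → b n < b (n + 1))
    (hb1 : 3 ≤ b 1)
    (hb2 : b 2 = 3 * b 1 + 2) :
    ¬ ∃ a : ℕ → ℕ,
      (∀ n, 1 ≤ n → a n < a (n + 1)) ∧
      (∀ n, 1 ≤ n → 0 < a n) ∧
      subsetSums (a '' {n | 1 ≤ n}) = (b '' {n | 1 ≤ n})ᶜ :=
  stmt_2_general b hbmono hb2
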